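/- Let Γ be a group acting by homeomorphisms on a connected topological space X. Suppose L₁, …, Lₙ are open subsets of X such that the family {γ(Lᵢ) : γ ∈ Γ, 1 ≤ i ≤ n} covers X, each Lᵢ is nonempty, and L₁ ≠ ∅. Then Γ is generated by the set S = {γ ∈ Γ : ∃ i, j with Lᵢ ∩ γ(Lⱼ) ≠ ∅}. -/
import Mathlib


open Pointwise

/-- If `Γ` acts by homeomorphisms on a connected space `X` and the translates of finitely
many nonempty open sets `L₁,…,Lₙ` cover `X`, then `Γ` is generated by
`S = {γ : ∃ i j, Lᵢ ∩ γ(Lⱼ) ≠ ∅}`. -/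
theorem stmt12 (Γ X : Type*) [Group Γ] [TopologicalSpace X] [ConnectedSpace X]
    [MulAction Γ X] (hcont : ∀ γ : Γ, Continuous fun x : X => γ • x)
    (n : ℕ) (L : Fin n → Set X) (hopen : ∀ i, IsOpen (L i))
    (hne : ∀ i, (L i).Nonempty)
    (hcover : ∀ x : X, ∃ (γ : Γ) (i : Fin n), x ∈ γ • L i) :
    Subgroup.closure {γ : Γ | ∃ i j : Fin n, (L i ∩ γ • L j).Nonempty} = ⊤ := by
  haveI : ContinuousConstSMul Γ X := ⟨hcont⟩
  set S := {γ : Γ | ∃ i j : Fin n, (L i ∩ γ • L j).Nonempty} with hS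
  set H := Subgroup.closure S with hH
  -- key lemma: if γ' ∈ H and L i meets (γ'⁻¹ * γ) • L j, then γ ∈ H
  have key : ∀ γ' γ : Γ, γ' ∈ H → (∃ i j : Fin n, (L i ∩ (γ'⁻¹ * γ) • L j).Nonempty) →
      γ ∈ H := by
    intro γ' γ hγ' h
    have h2 : γ'⁻¹ * γ ∈ H := Subgroup.subset_closure h
    have := mul_mem hγ' h2
    simpa using this
  set U : Set X := ⋃ (γ : Γ) (_ : γ ∈ H), ⋃ i, γ • L i with hU
  have hUopen : IsOpen U :=
    isOpen_iUnion fun γ => isOpen_iUnion fun _ => isOpen_iUnion fun i => (hopen i).smul γ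
  have hUmem : ∀ x, x ∈ U ↔ ∃ γ ∈ H, ∃ i, x ∈ γ • L i := by
    intro x
    simp [hU]
  -- the complement is contained in (indeed equal to) the union of non-H translates
  set V : Set X := ⋃ (γ : Γ) (_ : γ ∉ H), ⋃ i, γ • L i with hV
  have hVopen : IsOpen V :=
    isOpen_iUnion fun γ => isOpen_iUnion fun _ => isOpen_iUnion fun i => (hopen i).smul γ
  have hdisj : ∀ x, x ∈ U → x ∈ V → False := by
    intro x hxU hxV
    simp only [hV, Set.mem_iUnion] at hxV
    obtain ⟨γ, hγ, j, hxj⟩ := hxV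
    obtain ⟨γ', hγ', i, hxi⟩ := (hUmem x).1 hxU
    apply hγ
    apply key γ' γ hγ'
    refine ⟨i, j, γ'⁻¹ • x, ?_, ?_⟩
    · obtain ⟨y, hy, rfl⟩ := hxi
      simpa using hy
    · obtain ⟨y, hy, rfl⟩ := hxj
      refine ⟨y, hy, ?_⟩
      simp [mul_smul]
  have hcompl : Uᶜ = V := by
    apply Set.eq_of_subset_of_subset
    · intro x hx
      obtain ⟨γ, i, hxi⟩ := hcover x
      have hγ : γ ∉ H := by
        intro hγ
        exact hx ((hUmem x).2 ⟨γ, hγ, i, hxi⟩)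
      simp only [hV, Set.mem_iUnion]
      exact ⟨γ, hγ, i, hxi⟩
    · intro x hx hxU
      exact hdisj x hxU hx
  have hUclosed : IsClosed U := by
    rw [← isOpen_compl_iff, hcompl]; exact hVopen
  have hne' : U.Nonempty := by
    obtain ⟨x⟩ := (inferInstance : Nonempty X)
    obtain ⟨γ, i, _⟩ := hcover x
    obtain ⟨y, hy⟩ := hne i
    exact ⟨y, (hUmem y).2 ⟨1, one_mem H, i, by simpa using hy⟩⟩
  have hUuniv : U = Set.univ := IsClopen.eq_univ ⟨hUclosed, hUopen⟩ hne'
  rw [eq_top_iff]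
  intro γ _
  obtain ⟨x⟩ := (inferInstance : Nonempty X)
  obtain ⟨_, j, _⟩ := hcover x
  obtain ⟨y, hy⟩ := hne j
  have hγy : γ • y ∈ U := hUuniv ▸ Set.mem_univ _
  obtain ⟨γ', hγ', i, hxi⟩ := (hUmem _).1 hγy
  apply key γ' γ hγ'
  refine ⟨i, j, γ'⁻¹ • (γ • y), ?_, ?_⟩
  · obtain ⟨z, hz, hzeq⟩ := hxi
    rw [← hzeq]
    simpa using hz
  · exact ⟨y, hy, by simp [mul_smul]⟩
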